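/- arXiv:1311.3571 — 2 statements merged into one kernel-verified Lean document; each statement's English description precedes it below -/
import Mathlib

section
/- For every integer k ≥ 1, the ideal I_k is contained in the K-linear space W_k; that is, the two-sided ideal of A generated by W(k, 2·100^{k²}) is contained in Σ_{m≥0} A(m·100^{k²})·W(k,100^{k²})·A^1. -/
noncomputable section

/-- `A¹`: the free unital associative algebra over `K` on generators `x_0, x_1, x_2, …`,
realized as the monoid algebra of the free monoid on `ℕ`.  The free *non-unital*
algebra `A` sits inside it as the span of the monomials of positive length. -/
abbrev FA (K : Type) [Field K] : Type := MonoidAlgebra K (FreeMonoid ℕ)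

/-- The monomial `x_{i₁} x_{i₂} ⋯ x_{iₙ}` corresponding to the list `[i₁, …, iₙ]`. -/
def mon (K : Type) [Field K] (l : List ℕ) : FA K :=
  MonoidAlgebra.single (FreeMonoid.ofList l) 1

/-- The generator `x_i`. -/
def xg (K : Type) [Field K] (i : ℕ) : FA K := mon K [i]

/-- `A(n)`: the `K`-linear span of the monomials of length `n`. -/
def Agr (K : Type) [Field K] (n : ℕ) : Submodule K (FA K) :=
  Submodule.span K {a | ∃ l : List ℕ, l.length = n ∧ a = mon K l}

/-- The free non-unital algebra `A`: the span of monomials of positive length. -/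
def Apos (K : Type) [Field K] : Submodule K (FA K) :=
  Submodule.span K {a | ∃ l : List ℕ, l ≠ [] ∧ a = mon K l}

/-- `D` is the `K`-derivation with `D(x_i) = x_{i+1}` for every `i`. -/
def IsDer (K : Type) [Field K] (D : FA K →ₗ[K] FA K) : Prop :=
  (∀ a b : FA K, D (a * b) = D a * b + a * D b) ∧ ∀ i : ℕ, D (xg K i) = xg K (i + 1)

/-- `W(k, n, t)`:  `W(k,n,0)` is the set of monomials of length `n` in the letters
`x_0, …, x_{k-1}`, and `W(k,n,t+1) = D(W(k,n,t))`. -/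
def WsetL (K : Type) [Field K] (D : FA K →ₗ[K] FA K) (k n : ℕ) : ℕ → Set (FA K)
  | 0 => {a | ∃ l : List ℕ, l.length = n ∧ (∀ i ∈ l, i < k) ∧ a = mon K l}
  | t + 1 => D '' WsetL K D k n t

/-- `W(k, n) = ⋃ₜ W(k, n, t)`. -/
def Wset (K : Type) [Field K] (D : FA K →ₗ[K] FA K) (k n : ℕ) : Set (FA K) :=
  ⋃ t, WsetL K D k n t

/-- `I_k`: the two-sided ideal of `A` generated by `W(k, 2·100^{k²})`. -/
def Ik (K : Type) [Field K] (D : FA K →ₗ[K] FA K) (k : ℕ) : Submodule K (FA K) :=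
  Submodule.span K
    {a | ∃ u v w : FA K, w ∈ Wset K D k (2 * 100 ^ (k ^ 2)) ∧ a = u * w * v}

/-- `I = Σ_{k > 0} I_k`. -/
def Itot (K : Type) [Field K] (D : FA K →ₗ[K] FA K) : Submodule K (FA K) :=
  ⨆ k : ℕ, ⨆ _ : 1 ≤ k, Ik K D k

/-- `W_k = Σ_{m ≥ 0} A(m·100^{k²}) · W(k, 100^{k²}) · A¹`. -/
def Wk (K : Type) [Field K] (D : FA K →ₗ[K] FA K) (k : ℕ) : Submodule K (FA K) :=
  Submodule.span K {a | ∃ (l : List ℕ) (w v : FA K),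
    (∃ m : ℕ, l.length = m * 100 ^ (k ^ 2)) ∧ w ∈ Wset K D k (100 ^ (k ^ 2)) ∧
    a = mon K l * w * v}

/-- The set `Z_k`.  Here the letter of a monomial `s` in (1-indexed) position
`j` is `l[j-1]?` for the corresponding list `l`. -/
def Zset (K : Type) [Field K] (k : ℕ) : Set (FA K) :=
  {a | (∃ (κ : K) (l : List ℕ) (p q : ℕ), p < q ∧ q ≤ k ∧
          l.length = 100 ^ (k ^ 2) - 1 ∧
          l[3 ^ p * 100 ^ ((k - 1) ^ 2) - 1]? = l[3 ^ q * 100 ^ ((k - 1) ^ 2) - 1]? ∧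
          a = κ • mon K l) ∨
      (∃ (κ : K) (l₁ l₂ : List ℕ) (p q e₁ e₂ : ℕ), p < q ∧ q ≤ k ∧ e₂ < e₁ ∧ 0 < e₂ ∧
          l₁.length = 100 ^ (k ^ 2) - 1 ∧ l₂.length = 100 ^ (k ^ 2) - 1 ∧
          l₁[3 ^ p * 100 ^ ((k - 1) ^ 2) - 1]? = some e₁ ∧
          l₁[3 ^ q * 100 ^ ((k - 1) ^ 2) - 1]? = some e₂ ∧
          l₂[3 ^ p * 100 ^ ((k - 1) ^ 2) - 1]? = some e₂ ∧
          l₂[3 ^ q * 100 ^ ((k - 1) ^ 2) - 1]? = some e₁ ∧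
          (∀ j : ℕ, j + 1 ≠ 3 ^ p * 100 ^ ((k - 1) ^ 2) →
            j + 1 ≠ 3 ^ q * 100 ^ ((k - 1) ^ 2) → l₁[j]? = l₂[j]?) ∧
          a = κ • (mon K l₁ + mon K l₂))}

/-- `B_k = Σ_{m ≥ 0} A(m·100^{k²}) · Z_k · A¹`. -/
def Bk (K : Type) [Field K] (k : ℕ) : Submodule K (FA K) :=
  Submodule.span K {a | ∃ (l : List ℕ) (z v : FA K),
    (∃ m : ℕ, l.length = m * 100 ^ (k ^ 2)) ∧ z ∈ Zset K k ∧ a = mon K l * z * v}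

/-- `B_1 + B_2 + ⋯ + B_k`. -/
def Bsum (K : Type) [Field K] (k : ℕ) : Submodule K (FA K) :=
  ∑ i ∈ Finset.Icc 1 k, Bk K i

/-- The coefficients `a_j^{(m)}` of `(x_0 X)^m = Σ_j a_j^{(m)} X^j` in `A¹[X; D]`:
`a_0^{(0)} = 1`, `a_j^{(0)} = 0` for `j > 0`, and
`a_j^{(m+1)} = x_0 (a_{j-1}^{(m)} + D(a_j^{(m)}))` (with `a_{-1}^{(m)} = 0`). -/
def acoef (K : Type) [Field K] (D : FA K →ₗ[K] FA K) : ℕ → ℕ → FA K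
  | 0, 0 => 1
  | 0, _ + 1 => 0
  | m + 1, 0 => xg K 0 * D (acoef K D m 0)
  | m + 1, j + 1 => xg K 0 * (acoef K D m j + D (acoef K D m (j + 1)))

/-!
Write `N = 100^{k²}`. By linearity it suffices to treat `u · w · v` with `u` a monomial of length
`r` and `w = Dᵗ(s)` for a monomial `s` of length `2N` in `x_0, …, x_{k-1}`. Cut `s = s₁ s₂ s₃` with
`|s₁| = N - (r mod N)` and `|s₂| = N`. The subspace `A(|s₁|) · span W(k, N) · A¹` is `D`-stable,
since each factor is and `D` obeys the Leibniz rule, so it contains `Dᵗ(s)`. Multiplying on the left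
by `u` lands in `A(r + |s₁|) · span W(k, N) · A¹`, and `r + |s₁|` is a multiple of `N`.
-/

open Submodule Module.End

section Leibniz

variable {R A : Type*} [CommSemiring R] [Semiring A] [Algebra R A] {D : A →ₗ[R] A}

theorem mul_mem_invtSubmodule_of_leibniz (hD : ∀ a b, D (a * b) = D a * b + a * D b)
    {P Q : Submodule R A} (hP : P ∈ invtSubmodule D) (hQ : Q ∈ invtSubmodule D) :
    P * Q ∈ invtSubmodule D := by
  refine mul_le.2 fun p hp q hq ↦ ?_
  change D (p * q) ∈ P * Q
  rw [hD]
  exact add_mem (mul_mem_mul (hP hp) hq) (mul_mem_mul hp (hQ hq))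

end Leibniz

variable {K : Type} [Field K]

theorem mon_append (l₁ l₂ : List ℕ) : mon K (l₁ ++ l₂) = mon K l₁ * mon K l₂ := by
  rw [mon, mon, mon, MonoidAlgebra.single_mul_single, one_mul]
  rfl

theorem mon_nil : mon K [] = 1 := rfl

theorem mon_mem_Agr (l : List ℕ) : mon K l ∈ Agr K l.length :=
  subset_span ⟨l, rfl, rfl⟩

theorem Agr_mul_Agr_le (m n : ℕ) : Agr K m * Agr K n ≤ Agr K (m + n) := by
  rw [Agr, Agr, span_mul_span, span_le]
  rintro _ ⟨_, ⟨l₁, rfl, rfl⟩, _, ⟨l₂, rfl, rfl⟩, rfl⟩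
  change mon K l₁ * mon K l₂ ∈ Agr K _
  rw [← mon_append, ← List.length_append]
  exact mon_mem_Agr _

theorem mon_mem_Wset (D : FA K →ₗ[K] FA K) {k : ℕ} {l : List ℕ} (hl : ∀ i ∈ l, i < k) :
    mon K l ∈ Wset K D k l.length :=
  Set.mem_iUnion.2 ⟨0, l, rfl, hl, rfl⟩

theorem exists_eq_iterate_mon_of_mem_Wset {D : FA K →ₗ[K] FA K} {k n : ℕ} {w : FA K}
    (hw : w ∈ Wset K D k n) :
    ∃ t l, l.length = n ∧ (∀ i ∈ l, i < k) ∧ w = D^[t] (mon K l) := by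
  obtain ⟨t, ht⟩ := Set.mem_iUnion.1 hw
  clear hw
  induction t generalizing w with
  | zero => exact ⟨0, ht⟩
  | succ t ih =>
    obtain ⟨w', hw', rfl⟩ := ht
    obtain ⟨s, l, hl, hlk, rfl⟩ := ih hw'
    exact ⟨s + 1, l, hl, hlk, (Function.iterate_succ_apply' D s _).symm⟩

theorem span_Wset_mem_invtSubmodule (D : FA K →ₗ[K] FA K) (k n : ℕ) :
    span K (Wset K D k n) ∈ invtSubmodule D := by
  rw [mem_invtSubmodule, span_le]
  intro w hw
  obtain ⟨t, hw⟩ := Set.mem_iUnion.1 hw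
  exact subset_span (Set.mem_iUnion.2 ⟨t + 1, w, hw, rfl⟩)

namespace IsDer

variable {D : FA K →ₗ[K] FA K} (hD : IsDer K D)
include hD

theorem map_one : D 1 = 0 := by
  simpa using hD.1 1 1

theorem Agr_mem_invtSubmodule (n : ℕ) : Agr K n ∈ invtSubmodule D := by
  rw [mem_invtSubmodule, Agr, span_le]
  rintro _ ⟨l, rfl, rfl⟩
  change D (mon K l) ∈ Agr K l.length
  induction l with
  | nil =>
    rw [mon_nil, hD.map_one]
    exact zero_mem _
  | cons a l ih =>
    rw [show mon K (a :: l) = xg K a * mon K l from mon_append [a] l, hD.1, hD.2]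
    refine add_mem ?_ ?_
    · rw [xg, ← mon_append]
      exact mon_mem_Agr ((a + 1) :: l)
    · rw [List.length_cons, add_comm]
      exact Agr_mul_Agr_le _ _ (mul_mem_mul (mon_mem_Agr [a]) ih)

theorem exists_mon_mul_mul_mem {k n N : ℕ} (hN : 0 < N) (hn : 2 * N ≤ n) (l : List ℕ)
    {w : FA K} (hw : w ∈ Wset K D k n) (v : FA K) :
    ∃ m, mon K l * w * v ∈ Agr K (m * N) * span K (Wset K D k N) * ⊤ := by
  obtain ⟨t, s, rfl, hsk, rfl⟩ := exists_eq_iterate_mon_of_mem_Wset hw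
  set a := N - l.length % N
  have ha : l.length + a = (l.length / N + 1) * N := by
    have := Nat.div_add_mod l.length N
    have := Nat.mod_lt l.length hN
    rw [add_mul, one_mul, mul_comm]
    omega
  refine ⟨l.length / N + 1, ?_⟩
  set S := Agr K a * span K (Wset K D k N) * ⊤
  have hS : S ∈ invtSubmodule D :=
    mul_mem_invtSubmodule_of_leibniz hD.1
      (mul_mem_invtSubmodule_of_leibniz hD.1 (hD.Agr_mem_invtSubmodule a)
        (span_Wset_mem_invtSubmodule D k N)) (invtSubmodule.top_mem D)
  have hs : mon K s ∈ S := by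
    rw [← List.take_append_drop a s, ← List.take_append_drop N (s.drop a), mon_append,
      mon_append, ← mul_assoc]
    refine mul_mem_mul (mul_mem_mul ?_ (subset_span ?_)) mem_top
    · convert mon_mem_Agr (s.take a) using 2
      simp only [List.length_take]
      omega
    · convert mon_mem_Wset D fun i hi ↦ hsk i (List.mem_of_mem_drop (List.mem_of_mem_take hi))
        using 2
      simp only [List.length_take, List.length_drop]
      omega
  have hmem : mon K l * D^[t] (mon K s) * v ∈ Agr K l.length * S * ⊤ :=
    mul_mem_mul (mul_mem_mul (mon_mem_Agr l) (Set.MapsTo.iterate hS t hs)) mem_top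
  refine (?_ : Agr K l.length * S * ⊤ ≤ _) hmem
  calc Agr K l.length * S * ⊤
      = Agr K l.length * Agr K a * span K (Wset K D k N) * (⊤ * ⊤) := by
        simp only [S, mul_assoc]
    _ ≤ _ := by
        rw [← ha]
        exact mul_le_mul' (mul_le_mul' (Agr_mul_Agr_le _ _) le_rfl) le_top

end IsDer

theorem Agr_mul_span_Wset_mul_top_le_Wk (D : FA K →ₗ[K] FA K) (k m : ℕ) :
    Agr K (m * 100 ^ k ^ 2) * span K (Wset K D k (100 ^ k ^ 2)) * ⊤ ≤ Wk K D k := by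
  rw [Agr, ← span_univ, span_mul_span, span_mul_span, Wk, span_le]
  rintro _ ⟨_, ⟨_, ⟨l, hl, rfl⟩, w, hw, rfl⟩, v, -, rfl⟩
  exact subset_span ⟨l, w, v, ⟨m, hl⟩, hw, rfl⟩

theorem Ik_subset_Wk_general (K : Type) [Field K] (D : FA K →ₗ[K] FA K) (hD : IsDer K D)
    (k : ℕ) : Ik K D k ≤ Wk K D k := by
  rw [Ik, span_le]
  rintro _ ⟨u, v, w, hw, rfl⟩
  rw [SetLike.mem_coe]
  induction u using MonoidAlgebra.induction_on with
  | of g =>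
    have hg : MonoidAlgebra.of K (FreeMonoid ℕ) g = mon K g.toList := by
      rw [mon, FreeMonoid.ofList_toList]
      rfl
    obtain ⟨m, hm⟩ := hD.exists_mon_mul_mul_mem (by positivity) le_rfl g.toList hw v
    rw [hg]
    exact Agr_mul_span_Wset_mul_top_le_Wk D k m hm
  | add x y hx hy => simpa only [add_mul] using add_mem hx hy
  | smul c x hx => simpa only [smul_mul_assoc] using smul_mem _ c hx

/-- Lemma 1: for any `k ≥ 1`, the ideal `I_k` is contained in `W_k`. -/
theorem Ik_subset_Wk (K : Type) [Field K] (D : FA K →ₗ[K] FA K) (hD : IsDer K D)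
    (k : ℕ) (hk : 1 ≤ k) : Ik K D k ≤ Wk K D k :=
  Ik_subset_Wk_general K D hD k
end
end

section
/- Let k ≥ 1 and let a ∈ A(100^{k²} − 1) with a ∈ B_1 + … + B_k. Set ξ_i = c_i − c_{i−1} − 1 for i = 1, …, k+2, and let E = A(ξ_1)x_{c_0}A(ξ_2)x_{c_1}A(ξ_3)x_{c_2}⋯x_{c_k}A(ξ_{k+2}). Let b̄ be the sum of all basis summands of a (monomials with their coefficients in the monomial-basis expansion of a) that belong to E. Suppose moreover that for every non-identity permutation σ of the set {c_0, c_1, …, c_k}, the element a has no basis summands belonging to E^σ = A(ξ_1)x_{σ(c_0)}A(ξ_2)x_{σ(c_1)}A(ξ_3)x_{σ(c_2)}⋯x_{σ(c_k)}A(ξ_{k+2}). Then b̄ ∈ B_1 + … + B_{k−1}. -/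
noncomputable section

/-- The numbers `c_0 = 0`, `c_i = 3^{i-1}·100^{(k-1)²}` for `1 ≤ i ≤ k+1`, and
`c_{k+2} = 100^{k²}`. -/
def cseq (k : ℕ) : ℕ → ℕ
  | 0 => 0
  | i + 1 => if i + 1 = k + 2 then 100 ^ (k ^ 2) else 3 ^ i * 100 ^ ((k - 1) ^ 2)

/-- A monomial (given by its list `l` of letter-indices) lies in
`E^σ = A(ξ_1) x_{σ(c_0)} A(ξ_2) x_{σ(c_1)} ⋯ x_{σ(c_k)} A(ξ_{k+2})`, where
`ξ_i = c_i − c_{i-1} − 1`, iff it has length `100^{k²} − 1` and its letter in the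
(1-indexed) position `c_{i+1}` is `x_{c_{σ(i)}}` for every `i = 0, …, k`. -/
def EmonP (k : ℕ) (σ : Equiv.Perm (Fin (k + 1))) (l : List ℕ) : Prop :=
  l.length = 100 ^ (k ^ 2) - 1 ∧
  ∀ i : Fin (k + 1), l[cseq k ((i : ℕ) + 1) - 1]? = some (cseq k ((σ i : ℕ)))

open scoped Classical in
/-- The sum of all basis summands of `a` whose monomial satisfies `P`. -/
def summandsIn (K : Type) [Field K] (P : List ℕ → Prop) (a : FA K) : FA K :=
  MonoidAlgebra.ofCoeff (Finsupp.filter (fun s => P (FreeMonoid.toList s)) a.coeff)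

/-!
Let `P_σ` be the projection onto the summands lying in `E^σ` and let `Φ` be the linear map
rewriting, in every monomial, the letter in position `c_{r+1}` to `x_{c_r}` (`r = 0, …, k`).
The operator `T = Σ_σ sgn(σ) Φ P_σ` vanishes on `B_k`: a generator `u z v` of `B_k` with
`u ≠ 1` has no summand of length `100^{k²} - 1`; a monomial `z ∈ Z_k` of form (1) lies in no
`E^σ`; and the two monomials of a `z` of form (2) lie in `E^σ` and `E^{σ (p q)}` respectively
and have the same image under `Φ`, so their contributions cancel. For `i < k`, `Φ` and every
`P_σ` preserve `B_i`, because they only read or write letters in positions `c_1, …, c_{k+1}`,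
which are multiples of `100^{i²}` and so are never among the positions constrained by a generator
of `B_i`. Writing `a = r + b` with `r ∈ B_1 + ⋯ + B_{k-1}` and `b ∈ B_k`, the hypothesis on the
`E^σ` gives `b̄ = Φ P_1 a = T a = T r ∈ B_1 + ⋯ + B_{k-1}`.
-/

namespace SummandsInE

open MonoidAlgebra

variable {K : Type} [Field K]

lemma mon_nil : mon K [] = 1 := rfl

lemma mon_mul_mon (l₁ l₂ : List ℕ) : mon K l₁ * mon K l₂ = mon K (l₁ ++ l₂) := by
  simp [mon, single_mul_single]

lemma mon_mul_single (l : List ℕ) (w : FreeMonoid ℕ) (c : K) :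
    mon K l * single w c = single (FreeMonoid.ofList l * w) c := by
  simp [mon, single_mul_single]

open scoped Classical in
variable (K) in
def lsummandsIn (P : List ℕ → Prop) : FA K →ₗ[K] FA K where
  toFun := summandsIn K P
  map_add' _ _ := congrArg ofCoeff Finsupp.filter_add
  map_smul' _ _ := congrArg ofCoeff Finsupp.filter_smul

lemma lsummandsIn_apply (P : List ℕ → Prop) (a : FA K) :
    lsummandsIn K P a = summandsIn K P a := rfl

open scoped Classical in
lemma lsummandsIn_single (P : List ℕ → Prop) (w : FreeMonoid ℕ) (c : K) :
    lsummandsIn K P (single w c) = if P w.toList then single w c else 0 := by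
  change ofCoeff (Finsupp.filter _ (Finsupp.single w c)) = _
  split_ifs with h
  · rw [Finsupp.filter_single_of_pos (fun s : FreeMonoid ℕ => P s.toList) h]; rfl
  · rw [Finsupp.filter_single_of_neg (fun s : FreeMonoid ℕ => P s.toList) h]; rfl

open scoped Classical in
lemma lsummandsIn_eq_zero {P : List ℕ → Prop} {a : FA K}
    (h : ∀ l, P l → a.coeff (FreeMonoid.ofList l) = 0) : lsummandsIn K P a = 0 := by
  refine MonoidAlgebra.ext (Finsupp.ext fun s => ?_)
  change Finsupp.filter _ a.coeff s = 0
  rw [Finsupp.filter_apply]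
  split_ifs with hs
  · simpa using h _ hs
  · rfl

lemma lsummandsIn_mon_mul (P : List ℕ → Prop) (l : List ℕ) (v : FA K) :
    lsummandsIn K P (mon K l * v) = mon K l * lsummandsIn K (fun w => P (l ++ w)) v := by
  induction v using MonoidAlgebra.induction_linear with
  | zero => simp
  | add x y hx hy => rw [mul_add, map_add, hx, hy, map_add, mul_add]
  | single w c =>
    rw [mon_mul_single, lsummandsIn_single, lsummandsIn_single, FreeMonoid.toList_mul,
      FreeMonoid.toList_ofList]
    split_ifs <;> simp [mon_mul_single]

open scoped Classical in
lemma lsummandsIn_of_forall_eq_nil {P : List ℕ → Prop} (h : ∀ w, P w → w = []) (v : FA K) :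
    lsummandsIn K P v = if P [] then v.coeff 1 • 1 else 0 := by
  induction v using MonoidAlgebra.induction_linear with
  | zero => simp
  | add x y hx hy => rw [map_add, hx, hy]; split_ifs <;> simp [add_smul]
  | single w c =>
    rw [lsummandsIn_single]
    by_cases hw : P w.toList
    · obtain rfl : w = 1 := FreeMonoid.toList.injective (h _ hw)
      rw [if_pos hw, if_pos (show P [] from hw), one_def, smul_single, smul_eq_mul, mul_one]
      simp
    · rw [if_neg hw]
      split_ifs with hnil
      · have : w ≠ 1 := fun hw1 => hw (by rwa [hw1])
        simp [this.symm]
      · rfl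

def relabelWord (f : ℕ → ℕ → ℕ) (w : FreeMonoid ℕ) : FreeMonoid ℕ :=
  FreeMonoid.ofList (w.toList.mapIdx f)

variable (K) in
def relabel (f : ℕ → ℕ → ℕ) : FA K →ₗ[K] FA K := mapDomainLinearMap K K (relabelWord f)

lemma relabel_single (f : ℕ → ℕ → ℕ) (w : FreeMonoid ℕ) (c : K) :
    relabel K f (single w c) = single (relabelWord f w) c :=
  mapDomainLinearMap_single ..

lemma relabel_mon (f : ℕ → ℕ → ℕ) (l : List ℕ) : relabel K f (mon K l) = mon K (l.mapIdx f) :=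
  relabel_single ..

lemma relabel_mon_mul (f : ℕ → ℕ → ℕ) (l : List ℕ) (v : FA K) :
    relabel K f (mon K l * v) =
      mon K (l.mapIdx f) * relabel K (fun j => f (j + l.length)) v := by
  induction v using MonoidAlgebra.induction_linear with
  | zero => simp
  | add x y hx hy => rw [mul_add, map_add, hx, hy, map_add, mul_add]
  | single w c =>
    rw [mon_mul_single, relabel_single, relabel_single, mon_mul_single]
    simp [relabelWord, List.mapIdx_append]

lemma relabel_mul_of_mem_Agr {n : ℕ} {z : FA K} (hz : z ∈ Agr K n) (f : ℕ → ℕ → ℕ)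
    (v : FA K) :
    relabel K f (z * v) = relabel K f z * relabel K (fun j => f (j + n)) v := by
  induction hz using Submodule.span_induction with
  | mem x hx =>
    obtain ⟨l, rfl, rfl⟩ := hx
    rw [relabel_mon_mul, relabel_mon]
  | zero => simp
  | add x y _ _ hx hy => rw [add_mul, map_add, hx, hy, map_add, add_mul]
  | smul c x _ hx => rw [smul_mul_assoc, map_smul, hx, map_smul, smul_mul_assoc]

lemma relabel_lsummandsIn {P : List ℕ → Prop} {f : ℕ → ℕ → ℕ}
    (h : ∀ l, P l → l.mapIdx f = l) (a : FA K) :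
    relabel K f (lsummandsIn K P a) = lsummandsIn K P a := by
  induction a using MonoidAlgebra.induction_linear with
  | zero => simp
  | add x y hx hy => rw [map_add, map_add, hx, hy]
  | single w c =>
    rw [lsummandsIn_single]
    split_ifs with hw
    · rw [relabel_single, relabelWord, h _ hw, FreeMonoid.ofList_toList]
    · exact map_zero _

def specialPos (k r : ℕ) : ℕ := 3 ^ r * 100 ^ ((k - 1) ^ 2)

lemma specialPos_pos (k r : ℕ) : 0 < specialPos k r :=
  Nat.mul_pos (pow_pos (by norm_num) r) (pow_pos (by norm_num) _)

lemma specialPos_injective (k : ℕ) : Function.Injective (specialPos k) := fun _ _ h =>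
  Nat.pow_right_injective (Nat.le_succ 2) (Nat.eq_of_mul_eq_mul_right (by positivity) h)

lemma cseq_succ {k r : ℕ} (hr : r ≤ k) : cseq k (r + 1) = specialPos k r := by
  rw [cseq, if_neg (by omega)]; rfl

lemma cseq_injective (k : ℕ) : Function.Injective fun i : Fin (k + 1) => cseq k i := by
  rintro ⟨_ | r, hr⟩ ⟨_ | r', hr'⟩ h <;> dsimp only at h
  · rfl
  · rw [cseq_succ (by omega)] at h
    exact absurd h (specialPos_pos k r').ne
  · rw [cseq_succ (by omega)] at h
    exact absurd h (specialPos_pos k r).ne'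
  · rw [cseq_succ (by omega), cseq_succ (by omega)] at h
    simp [specialPos_injective k h]

lemma emonP_iff {k : ℕ} {σ : Equiv.Perm (Fin (k + 1))} {l : List ℕ} :
    EmonP k σ l ↔ l.length = 100 ^ (k ^ 2) - 1 ∧
      ∀ i : Fin (k + 1), l[specialPos k i - 1]? = some (cseq k (σ i)) :=
  and_congr_right fun _ => forall_congr' fun i => by rw [cseq_succ i.is_le]

lemma not_emonP_of_getElem?_eq {k : ℕ} {p q : Fin (k + 1)} (hpq : p ≠ q) {l : List ℕ}
    (h : l[specialPos k p - 1]? = l[specialPos k q - 1]?) (σ : Equiv.Perm (Fin (k + 1))) :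
    ¬ EmonP k σ l := by
  rw [emonP_iff]
  rintro ⟨-, hl⟩
  rw [hl, hl, Option.some_inj] at h
  exact hpq (σ.injective (cseq_injective k h))

lemma emonP_iff_of_getElem?_perm {k : ℕ} {τ : Equiv.Perm (Fin (k + 1))} {l₁ l₂ : List ℕ}
    (hlen : l₁.length = l₂.length)
    (h : ∀ i, l₂[specialPos k (τ i) - 1]? = l₁[specialPos k i - 1]?)
    (σ : Equiv.Perm (Fin (k + 1))) : EmonP k σ l₂ ↔ EmonP k (σ * τ) l₁ := by
  rw [emonP_iff, emonP_iff, hlen, ← τ.forall_congr_right]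
  simp only [h, Equiv.Perm.mul_apply]

open scoped Classical in
def altCount (k : ℕ) (l : List ℕ) : ℤ :=
  ∑ σ : Equiv.Perm (Fin (k + 1)), if EmonP k σ l then (Equiv.Perm.sign σ : ℤ) else 0

lemma altCount_eq_zero {k : ℕ} {l : List ℕ} (h : ∀ σ, ¬ EmonP k σ l) : altCount k l = 0 :=
  Finset.sum_eq_zero fun σ _ => if_neg (h σ)

/-- Right multiplication by a transposition reverses signs. -/
lemma altCount_eq_neg {k : ℕ} {p q : Fin (k + 1)} (hpq : p ≠ q) {l₁ l₂ : List ℕ}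
    (h : ∀ σ, EmonP k σ l₂ ↔ EmonP k (σ * Equiv.swap p q) l₁) :
    altCount k l₂ = -altCount k l₁ := by
  classical
  set g : Equiv.Perm (Fin (k + 1)) → ℤ :=
    fun τ => -if EmonP k τ l₁ then (Equiv.Perm.sign τ : ℤ) else 0
  calc altCount k l₂ = ∑ σ, g (Equiv.mulRight (Equiv.swap p q) σ) := by
        refine Finset.sum_congr rfl fun σ _ => ?_
        simp only [g, h, Equiv.coe_mulRight]
        split_ifs
        · rw [Equiv.Perm.sign_mul, Equiv.Perm.sign_swap hpq]
          simp
        · rfl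
    _ = -altCount k l₁ := by
        rw [Equiv.sum_comp, Finset.sum_neg_distrib]
        rfl

open scoped Classical in
/-- `c_r` is the letter in position `c_{r+1}` of every monomial of `E`. -/
def fixLetter (k j a : ℕ) : ℕ :=
  if h : ∃ r ≤ k, j + 1 = specialPos k r then cseq k h.choose else a

lemma fixLetter_specialPos {k r : ℕ} (hr : r ≤ k) :
    fixLetter k (specialPos k r - 1) = fun _ => cseq k r := by
  have hex : ∃ r' ≤ k, specialPos k r - 1 + 1 = specialPos k r' :=
    ⟨r, hr, Nat.sub_add_cancel (specialPos_pos k r)⟩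
  funext a
  rw [fixLetter, dif_pos hex]
  exact congrArg _ (specialPos_injective k
    (hex.choose_spec.2.symm.trans (Nat.sub_add_cancel (specialPos_pos k r))))

lemma fixLetter_eq_id {k j : ℕ} (h : ∀ r ≤ k, j + 1 ≠ specialPos k r) : fixLetter k j = id :=
  funext fun _ => dif_neg fun ⟨r, hr, hj⟩ => h r hr hj

lemma mapIdx_fixLetter_of_emonP_one {k : ℕ} {l : List ℕ} (h : EmonP k 1 l) :
    l.mapIdx (fixLetter k) = l := by
  refine List.ext_getElem? fun j => ?_
  rw [List.getElem?_mapIdx]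
  by_cases hj : ∃ r ≤ k, j + 1 = specialPos k r
  · obtain ⟨r, hr, hjr⟩ := hj
    have hl : l[specialPos k r - 1]? = some (cseq k r) :=
      (emonP_iff.mp h).2 ⟨r, Nat.lt_succ_of_le hr⟩
    rw [Nat.eq_sub_of_add_eq hjr, fixLetter_specialPos hr, hl]
    rfl
  · push Not at hj
    rw [fixLetter_eq_id hj, Option.map_id_apply]

lemma mapIdx_fixLetter_congr {k : ℕ} {l₁ l₂ : List ℕ} (hlen : l₁.length = l₂.length)
    (h : ∀ j, (∀ r ≤ k, j + 1 ≠ specialPos k r) → l₁[j]? = l₂[j]?) :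
    l₁.mapIdx (fixLetter k) = l₂.mapIdx (fixLetter k) := by
  refine List.ext_getElem? fun j => ?_
  rw [List.getElem?_mapIdx, List.getElem?_mapIdx]
  by_cases hj : ∃ r ≤ k, j + 1 = specialPos k r
  · obtain ⟨r, hr, hjr⟩ := hj
    rw [Nat.eq_sub_of_add_eq hjr]
    by_cases hlt : specialPos k r - 1 < l₁.length
    · rw [List.getElem?_eq_getElem hlt, List.getElem?_eq_getElem (hlen ▸ hlt)]
      simp only [Option.map_some, fixLetter_specialPos hr]
    · rw [List.getElem?_eq_none (by omega), List.getElem?_eq_none (by omega)]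
  · push Not at hj
    rw [h j hj]

/-- The 0-indexed positions at which a generator `u z v` of `B_i` (`l(u)` a multiple of
`100^{i²}`, `z ∈ Z_i`) constrains its letters. -/
def specialIndices (i : ℕ) : Set ℕ :=
  {t | ∃ m r, r ≤ i ∧ t + 1 = m * 100 ^ (i ^ 2) + specialPos i r}

lemma specialPos_lt {i r : ℕ} (hi : 1 ≤ i) (hr : r ≤ i) : specialPos i r < 100 ^ (i ^ 2) := by
  obtain ⟨j, rfl⟩ : ∃ j, i = j + 1 := ⟨i - 1, by omega⟩
  calc specialPos (j + 1) r ≤ 3 ^ (j + 1) * 100 ^ (j ^ 2) :=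
        Nat.mul_le_mul_right _ (Nat.pow_le_pow_right (by norm_num) hr)
    _ < 100 ^ (j + 1) * 100 ^ (j ^ 2) :=
        Nat.mul_lt_mul_of_pos_right (Nat.pow_lt_pow_left (by norm_num) (by omega)) (by positivity)
    _ ≤ 100 ^ ((j + 1) ^ 2) := by
        rw [← pow_add]
        exact Nat.pow_le_pow_right (by norm_num) (by ring_nf; omega)

lemma specialPos_sub_one_notMem_specialIndices {i k : ℕ} (hi : 1 ≤ i) (hik : i < k) (r : ℕ) :
    specialPos k r - 1 ∉ specialIndices i := by
  rintro ⟨m, s, hs, h⟩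
  have hdvd : 100 ^ (i ^ 2) ∣ specialPos k r :=
    Dvd.dvd.mul_left (pow_dvd_pow 100 (Nat.pow_le_pow_left (by omega) 2)) _
  rw [Nat.sub_add_cancel (specialPos_pos k r)] at h
  have hmod := congrArg (· % 100 ^ (i ^ 2)) h
  simp only [Nat.mod_eq_zero_of_dvd hdvd, Nat.mul_add_mod_self_right,
    Nat.mod_eq_of_lt (specialPos_lt hi hs)] at hmod
  exact (specialPos_pos i s).ne hmod

lemma Zset_subset_Agr {i : ℕ} {z : FA K} (hz : z ∈ Zset K i) :
    z ∈ Agr K (100 ^ (i ^ 2) - 1) := by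
  have hmon : ∀ l : List ℕ, l.length = 100 ^ (i ^ 2) - 1 →
      mon K l ∈ Agr K (100 ^ (i ^ 2) - 1) :=
    fun l hl => Submodule.subset_span ⟨l, hl, rfl⟩
  rcases hz with ⟨κ, l, -, -, -, -, hl, -, rfl⟩ |
    ⟨κ, l₁, l₂, -, -, -, -, -, -, -, -, hl₁, hl₂, -, -, -, -, -, rfl⟩
  · exact Submodule.smul_mem _ κ (hmon l hl)
  · exact Submodule.smul_mem _ κ (Submodule.add_mem _ (hmon l₁ hl₁) (hmon l₂ hl₂))

lemma getElem?_mapIdx_of_eq_id {f : ℕ → ℕ → ℕ} {j : ℕ} (h : f j = id) (l : List ℕ) :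
    (l.mapIdx f)[j]? = l[j]? := by
  rw [List.getElem?_mapIdx, h, Option.map_id_apply]

lemma relabel_mem_Zset {i : ℕ} {f : ℕ → ℕ → ℕ} (hf : ∀ r ≤ i, f (specialPos i r - 1) = id)
    {z : FA K} (hz : z ∈ Zset K i) : relabel K f z ∈ Zset K i := by
  rcases hz with ⟨κ, l, p, q, hpq, hq, hl, heq, rfl⟩ |
    ⟨κ, l₁, l₂, p, q, e₁, e₂, hpq, hq, he, he₂, hl₁, hl₂, h₁p, h₁q, h₂p, h₂q, hagree, rfl⟩
  · refine Or.inl ⟨κ, l.mapIdx f, p, q, hpq, hq, by rw [List.length_mapIdx, hl], ?_,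
      by rw [map_smul, relabel_mon]⟩
    exact (getElem?_mapIdx_of_eq_id (hf p (hpq.le.trans hq)) l).trans
      (heq.trans (getElem?_mapIdx_of_eq_id (hf q hq) l).symm)
  · have hp := hf p (hpq.le.trans hq)
    refine Or.inr ⟨κ, l₁.mapIdx f, l₂.mapIdx f, p, q, e₁, e₂, hpq, hq, he, he₂,
      by rw [List.length_mapIdx, hl₁], by rw [List.length_mapIdx, hl₂],
      (getElem?_mapIdx_of_eq_id hp l₁).trans h₁p,
      (getElem?_mapIdx_of_eq_id (hf q hq) l₁).trans h₁q,
      (getElem?_mapIdx_of_eq_id hp l₂).trans h₂p,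
      (getElem?_mapIdx_of_eq_id (hf q hq) l₂).trans h₂q,
      fun j hjp hjq => ?_, by rw [map_smul, map_add, relabel_mon, relabel_mon]⟩
    rw [List.getElem?_mapIdx, List.getElem?_mapIdx, hagree j hjp hjq]

lemma Bk_le_comap {i : ℕ} {F : FA K →ₗ[K] FA K} {S : Submodule K (FA K)}
    (hF : ∀ (m : ℕ) (l : List ℕ) (z v : FA K), l.length = m * 100 ^ (i ^ 2) → z ∈ Zset K i →
      F (mon K l * z * v) ∈ S) : Bk K i ≤ S.comap F :=
  Submodule.span_le.mpr fun _ ⟨l, z, v, ⟨m, hl⟩, hz, hx⟩ => hx ▸ hF m l z v hl hz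

lemma mon_mul_mul_mem_Bk {i m : ℕ} {l : List ℕ} (hl : l.length = m * 100 ^ (i ^ 2))
    {z : FA K} (hz : z ∈ Zset K i) (v : FA K) : mon K l * z * v ∈ Bk K i :=
  Submodule.subset_span ⟨l, z, v, ⟨m, hl⟩, hz, rfl⟩

lemma relabel_mem_Bk {i : ℕ} {f : ℕ → ℕ → ℕ} (hf : ∀ t ∈ specialIndices i, f t = id)
    {x : FA K} (hx : x ∈ Bk K i) : relabel K f x ∈ Bk K i := by
  refine Submodule.mem_comap.mp (Bk_le_comap (fun m l z v hl hz => ?_) hx)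
  rw [mul_assoc, relabel_mon_mul, relabel_mul_of_mem_Agr (Zset_subset_Agr hz), ← mul_assoc]
  refine mon_mul_mul_mem_Bk (by rw [List.length_mapIdx, hl])
    (relabel_mem_Zset (f := fun j => f (j + l.length)) (fun r hr => hf _ ⟨m, r, hr, ?_⟩) hz) _
  have := specialPos_pos i r
  omega

lemma getElem?_append_append_congr {α : Type*} {l y₁ y₂ w : List α}
    (hlen : y₁.length = y₂.length) {t : ℕ}
    (h : l.length ≤ t → y₁[t - l.length]? = y₂[t - l.length]?) :
    (l ++ y₁ ++ w)[t]? = (l ++ y₂ ++ w)[t]? := by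
  rw [List.append_assoc, List.append_assoc]
  rcases lt_or_ge t l.length with ht | ht
  · rw [List.getElem?_append_left ht, List.getElem?_append_left ht]
  rw [List.getElem?_append_right ht, List.getElem?_append_right ht]
  rcases lt_or_ge (t - l.length) y₁.length with ht' | ht'
  · rw [List.getElem?_append_left ht', List.getElem?_append_left (hlen ▸ ht'), h ht]
  · rw [List.getElem?_append_right ht', List.getElem?_append_right (hlen ▸ ht'), hlen]

lemma lsummandsIn_mem_Bk {i : ℕ} {P : List ℕ → Prop}
    (hP : ∀ y₁ y₂ : List ℕ, y₁.length = y₂.length →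
      (∀ t ∉ specialIndices i, y₁[t]? = y₂[t]?) → (P y₁ ↔ P y₂))
    {x : FA K} (hx : x ∈ Bk K i) : lsummandsIn K P x ∈ Bk K i := by
  refine Submodule.mem_comap.mp (Bk_le_comap (fun m l z v hl hz => ?_) hx)
  have hmon : ∀ y, lsummandsIn K P (mon K l * mon K y * v) =
      mon K l * mon K y * lsummandsIn K (fun w => P (l ++ y ++ w)) v := fun y => by
    rw [mon_mul_mon, lsummandsIn_mon_mul]
  obtain ⟨κ, l₀, -, -, -, -, -, -, rfl⟩ |
    ⟨κ, l₁, l₂, p, q, -, -, hpq, hq, -, -, hl₁, hl₂, -, -, -, -, hagree, rfl⟩ := id hz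
  · rw [mul_smul_comm, smul_mul_assoc, map_smul, hmon, ← smul_mul_assoc, ← mul_smul_comm]
    exact mon_mul_mul_mem_Bk hl hz _
  have hQ : (fun w => P (l ++ l₂ ++ w)) = fun w => P (l ++ l₁ ++ w) := by
    refine funext fun w => propext (hP _ _ (by simp [hl₁, hl₂]) fun t ht =>
      getElem?_append_append_congr (hl₂.trans hl₁.symm) fun hlt => (hagree _ ?_ ?_).symm)
    · exact fun hc => ht ⟨m, p, hpq.le.trans hq, by unfold specialPos; omega⟩
    · exact fun hc => ht ⟨m, q, hq, by unfold specialPos; omega⟩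
  rw [mul_smul_comm, smul_mul_assoc, mul_add, add_mul, map_smul, map_add, hmon, hmon, hQ,
    ← add_mul, ← mul_add, ← smul_mul_assoc, ← mul_smul_comm]
  exact mon_mul_mul_mem_Bk hl hz _

lemma Bsum_succ (k : ℕ) : Bsum K (k + 1) = Bsum K k ⊔ Bk K (k + 1) := by
  rw [Bsum, Finset.sum_Icc_succ_top (by omega), Submodule.add_eq_sup]
  rfl

lemma map_mem_Bsum {k : ℕ} {F : FA K →ₗ[K] FA K}
    (hF : ∀ i, 1 ≤ i → i ≤ k → ∀ x ∈ Bk K i, F x ∈ Bk K i) {x : FA K} (hx : x ∈ Bsum K k) :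
    F x ∈ Bsum K k := by
  induction k generalizing x with
  | zero =>
    rw [Bsum, Finset.Icc_eq_empty (by omega), Finset.sum_empty, Submodule.zero_eq_bot,
      Submodule.mem_bot] at hx
    rw [hx, map_zero]
    exact Submodule.zero_mem _
  | succ k ih =>
    rw [Bsum_succ, Submodule.mem_sup] at hx ⊢
    obtain ⟨y, hy, z, hz, rfl⟩ := hx
    exact ⟨F y, ih (fun i hi hik => hF i hi (by omega)) hy, F z, hF _ (by omega) le_rfl z hz,
      (map_add F y z).symm⟩

lemma emonP_iff_swap {k p q : ℕ} (hpq : p < q) (hq : q ≤ k) {l₁ l₂ : List ℕ} {e₁ e₂ : ℕ}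
    (hlen : l₁.length = l₂.length)
    (h₁p : l₁[specialPos k p - 1]? = some e₁) (h₁q : l₁[specialPos k q - 1]? = some e₂)
    (h₂p : l₂[specialPos k p - 1]? = some e₂) (h₂q : l₂[specialPos k q - 1]? = some e₁)
    (hagree : ∀ j, j + 1 ≠ specialPos k p → j + 1 ≠ specialPos k q → l₁[j]? = l₂[j]?)
    (σ : Equiv.Perm (Fin (k + 1))) :
    EmonP k σ l₂ ↔ EmonP k (σ * Equiv.swap ⟨p, by omega⟩ ⟨q, by omega⟩) l₁ := by
  refine emonP_iff_of_getElem?_perm hlen (fun i => ?_) σ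
  rcases eq_or_ne i ⟨p, by omega⟩ with rfl | hip
  · rw [Equiv.swap_apply_left]
    exact h₂q.trans h₁p.symm
  rcases eq_or_ne i ⟨q, by omega⟩ with rfl | hiq
  · rw [Equiv.swap_apply_right]
    exact h₂p.trans h₁q.symm
  rw [Equiv.swap_apply_of_ne_of_ne hip hiq]
  refine (hagree _ ?_ ?_).symm <;> rw [Nat.sub_add_cancel (specialPos_pos k i)] <;> intro h
  · exact hip (Fin.ext (specialPos_injective k h))
  · exact hiq (Fin.ext (specialPos_injective k h))

open scoped Classical in
lemma lsummandsIn_emonP_mon_mul {k : ℕ} (σ : Equiv.Perm (Fin (k + 1))) {l : List ℕ}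
    (hl : 100 ^ (k ^ 2) - 1 ≤ l.length) (v : FA K) :
    lsummandsIn K (EmonP k σ) (mon K l * v) =
      if EmonP k σ l then v.coeff 1 • mon K l else 0 := by
  rw [lsummandsIn_mon_mul, lsummandsIn_of_forall_eq_nil, List.append_nil]
  · split_ifs <;> simp
  · intro w hw
    have := hw.1
    rw [List.length_append] at this
    exact List.length_eq_zero_iff.mp (by omega)

variable (K) in
def altNormalize (k : ℕ) : FA K →ₗ[K] FA K :=
  ∑ σ : Equiv.Perm (Fin (k + 1)),
    (Equiv.Perm.sign σ : ℤ) • (relabel K (fixLetter k) ∘ₗ lsummandsIn K (EmonP k σ))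

lemma altNormalize_apply (k : ℕ) (x : FA K) :
    altNormalize K k x = ∑ σ : Equiv.Perm (Fin (k + 1)),
      (Equiv.Perm.sign σ : ℤ) • relabel K (fixLetter k) (lsummandsIn K (EmonP k σ) x) := by
  simp [altNormalize]

lemma altNormalize_mon_mul {k : ℕ} {l : List ℕ} (hl : 100 ^ (k ^ 2) - 1 ≤ l.length)
    (v : FA K) :
    altNormalize K k (mon K l * v) =
      altCount k l • v.coeff 1 • mon K (l.mapIdx (fixLetter k)) := by
  rw [altNormalize_apply, altCount, Finset.sum_smul]
  refine Finset.sum_congr rfl fun σ _ => ?_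
  rw [lsummandsIn_emonP_mon_mul σ hl]
  split_ifs <;> simp [relabel_mon]

lemma altNormalize_Zset_mul {k : ℕ} {z : FA K} (hz : z ∈ Zset K k) (v : FA K) :
    altNormalize K k (z * v) = 0 := by
  rcases hz with ⟨κ, l, p, q, hpq, hq, hl, heq, rfl⟩ |
    ⟨κ, l₁, l₂, p, q, e₁, e₂, hpq, hq, -, -, hl₁, hl₂, h₁p, h₁q, h₂p, h₂q, hagree, rfl⟩
  · rw [smul_mul_assoc, map_smul, altNormalize_mon_mul hl.ge,
      altCount_eq_zero (not_emonP_of_getElem?_eq (p := ⟨p, by omega⟩) (q := ⟨q, by omega⟩)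
        (by simp [hpq.ne]) heq),
      zero_smul, smul_zero]
  · have hlen := hl₁.trans hl₂.symm
    rw [smul_mul_assoc, add_mul, map_smul, map_add, altNormalize_mon_mul hl₁.ge,
      altNormalize_mon_mul hl₂.ge,
      altCount_eq_neg (by simp [hpq.ne]) (emonP_iff_swap hpq hq hlen h₁p h₁q h₂p h₂q hagree),
      mapIdx_fixLetter_congr hlen fun j hj => hagree j (hj p (by omega)) (hj q hq),
      neg_smul, add_neg_cancel, smul_zero]

lemma altNormalize_eq_zero_of_mem_Bk {k : ℕ} {x : FA K} (hx : x ∈ Bk K k) :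
    altNormalize K k x = 0 := by
  rw [← Submodule.mem_bot K]
  refine Submodule.mem_comap.mp (Bk_le_comap (fun m l z v hl hz => ?_) hx)
  rw [Submodule.mem_bot]
  rcases m with _ | m
  · obtain rfl : l = [] := List.length_eq_zero_iff.mp (by simpa using hl)
    rw [mon_nil, one_mul, altNormalize_Zset_mul hz]
  · have hlen : 100 ^ (k ^ 2) ≤ l.length := hl ▸ Nat.le_mul_of_pos_left _ m.succ_pos
    have hN : 0 < 100 ^ (k ^ 2) := by positivity
    rw [mul_assoc, altNormalize_mon_mul (by omega),
      altCount_eq_zero fun σ h => by have := h.1; omega, zero_smul]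

lemma altNormalize_eq_lsummandsIn_one {k : ℕ} {a : FA K}
    (ha : ∀ σ : Equiv.Perm (Fin (k + 1)), σ ≠ 1 →
      ∀ l, EmonP k σ l → a.coeff (FreeMonoid.ofList l) = 0) :
    altNormalize K k a = lsummandsIn K (EmonP k 1) a := by
  rw [altNormalize_apply, Finset.sum_eq_single 1
      (fun σ _ hσ => by rw [lsummandsIn_eq_zero (ha σ hσ), map_zero, smul_zero])
      (fun h => absurd (Finset.mem_univ 1) h),
    Equiv.Perm.sign_one, Units.val_one, one_smul,
    relabel_lsummandsIn fun _ => mapIdx_fixLetter_of_emonP_one]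

lemma altNormalize_mem_Bsum {i k : ℕ} (hik : i < k) {x : FA K} (hx : x ∈ Bsum K i) :
    altNormalize K k x ∈ Bsum K i := by
  refine map_mem_Bsum (fun j hj hji y hy => ?_) hx
  have hnot := specialPos_sub_one_notMem_specialIndices hj (hji.trans_lt hik)
  rw [altNormalize_apply]
  refine Submodule.sum_mem _ fun σ _ =>
    zsmul_mem (relabel_mem_Bk ?_ (lsummandsIn_mem_Bk ?_ hy)) _
  · exact fun t ht => fixLetter_eq_id fun r _ h => hnot r (Nat.eq_sub_of_add_eq h ▸ ht)
  · intro y₁ y₂ hlen hagree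
    simp only [emonP_iff, hlen, hagree _ (hnot _)]

end SummandsInE

theorem summands_in_E_general (K : Type) [Field K] (k : ℕ) (hk : 1 ≤ k) (a : FA K)
    (haB : a ∈ Bsum K k)
    (hσ : ∀ σ : Equiv.Perm (Fin (k + 1)), σ ≠ 1 →
      ∀ l : List ℕ, EmonP k σ l → a.coeff (FreeMonoid.ofList l) = 0) :
    summandsIn K (EmonP k 1) a ∈ Bsum K (k - 1) := by
  obtain ⟨k, rfl⟩ : ∃ k', k = k' + 1 := ⟨k - 1, by omega⟩
  rw [SummandsInE.Bsum_succ, Submodule.mem_sup] at haB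
  obtain ⟨r, hr, b, hb, rfl⟩ := haB
  rw [← SummandsInE.lsummandsIn_apply, ← SummandsInE.altNormalize_eq_lsummandsIn_one hσ,
    map_add, SummandsInE.altNormalize_eq_zero_of_mem_Bk hb, add_zero]
  exact SummandsInE.altNormalize_mem_Bsum (Nat.lt_succ_self k) hr

/-- Lemma 8: let `a ∈ A(100^{k²} − 1)` with `a ∈ B_1 + ⋯ + B_k`, let `b̄` be the sum of
the basis summands of `a` lying in `E`, and suppose `a` has no basis summands in `E^σ`
for any non-identity permutation `σ` of `{c_0, …, c_k}`.  Then `b̄ ∈ B_1 + ⋯ + B_{k-1}`. -/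
theorem summands_in_E (K : Type) [Field K] (k : ℕ) (hk : 1 ≤ k) (a : FA K)
    (haA : a ∈ Agr K (100 ^ (k ^ 2) - 1)) (haB : a ∈ Bsum K k)
    (hσ : ∀ σ : Equiv.Perm (Fin (k + 1)), σ ≠ 1 →
      ∀ l : List ℕ, EmonP k σ l → a.coeff (FreeMonoid.ofList l) = 0) :
    summandsIn K (EmonP k 1) a ∈ Bsum K (k - 1) :=
  summands_in_E_general K k hk a haB hσ
end
end
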